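/- Littlewood's identity: for any partitions β, α, γ, one has s_β ∗ (s_α · s_γ) = Σ_λ (s_{β/λ} ∗ s_α) · (s_λ ∗ s_γ), where the sum is over all partitions λ. -/

import Mathlib

/-!
Expanding `s_γ` in power sums, it suffices to treat `s_γ = p_ν`. As `f ∗ p_ν = ⟨f, p_ν⟩ p_ν`, the
summand for `λ` is then `⟨p_ν, s_λ⟩ (D_{s_λ} s_β ∗ s_α) · p_ν`; since `D_f` is linear in `f`, the
sum collapses by the Schur expansion `p_ν = ∑_λ ⟨p_ν, s_λ⟩ s_λ` to `(D_{p_ν} s_β ∗ s_α) · p_ν`.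
Finally `s_β ∗ (f · p_ν) = (D_{p_ν} s_β ∗ f) · p_ν` is checked on `f = p_μ`, where both sides are
`⟨s_β, p_μ p_ν⟩ p_μ p_ν` because `p_μ p_ν` is again a power sum.
-/

open scoped TensorProduct Classical

noncomputable section

/-- The single-row Young diagram with `k` boxes, whose Schur function is `h_k`
and whose power sum is `p_k`. -/
def rowDiagram (k : ℕ) : YoungDiagram :=
  YoungDiagram.ofRowLens [k] (List.sortedGE_iff_pairwise.mpr (List.pairwise_singleton _ k))

/-- The quantity `z_λ = ∏ i^{m_i} m_i!` attached to a partition (Young diagram). -/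
def zee (μ : YoungDiagram) : ℚ :=
  ((μ.rowLens.prod * (μ.rowLens.dedup.map fun i => (μ.rowLens.count i).factorial).prod : ℕ) : ℚ)

/-- The ring of symmetric functions over `ℚ`, presented with its Schur basis `s`,
its power-sum basis `p`, the Hall inner product (for which the Schur functions are
orthonormal and `⟨p_λ, p_μ⟩ = δ_{λμ} z_λ`), the skewing operators `D f` (adjoint of
multiplication by `f`), and the Kronecker product `kron`
(determined by `p_λ ∗ p_μ = δ_{λμ} z_λ p_λ`). -/
structure SymmFn (Λ : Type*) [CommRing Λ] [Algebra ℚ Λ] where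
  /-- the Schur basis -/
  s : Module.Basis YoungDiagram ℚ Λ
  /-- the power-sum basis -/
  p : Module.Basis YoungDiagram ℚ Λ
  /-- the Hall inner product -/
  inner : Λ →ₗ[ℚ] Λ →ₗ[ℚ] ℚ
  inner_symm : ∀ f g, inner f g = inner g f
  inner_schur : ∀ μ ν, inner (s μ) (s ν) = if μ = ν then 1 else 0
  inner_power : ∀ μ ν, inner (p μ) (p ν) = if μ = ν then zee μ else 0
  power_mul : ∀ μ : YoungDiagram, p μ = (μ.rowLens.map fun k => p (rowDiagram k)).prod
  /-- the skewing operator `D f`, adjoint of multiplication by `f` -/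
  D : Λ → Λ →ₗ[ℚ] Λ
  D_adjoint : ∀ f g h, inner (D f g) h = inner g (f * h)
  /-- the Kronecker (internal) product -/
  kron : Λ →ₗ[ℚ] Λ →ₗ[ℚ] Λ
  kron_power : ∀ μ ν, kron (p μ) (p ν) = if μ = ν then zee μ • p μ else 0

namespace SymmFn

variable {Λ : Type*} [CommRing Λ] [Algebra ℚ Λ] (S : SymmFn Λ)

/-- The operator `U f` of multiplication by `f`. -/
def U (_S : SymmFn Λ) (f : Λ) : Λ →ₗ[ℚ] Λ := LinearMap.mulLeft ℚ f

/-- The skew Schur function `s_{α/θ} = D_{s_θ}(s_α)`. -/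
def skew (α θ : YoungDiagram) : Λ := S.D (S.s θ) (S.s α)

theorem _root_.Module.Basis.finsum_repr_smul_apply {ι R M N : Type*} [Semiring R]
    [AddCommMonoid M] [Module R M] [AddCommMonoid N] [Module R N]
    (b : Module.Basis ι R M) (T : M →ₗ[R] N) (x : M) :
    ∑ᶠ i, b.repr x i • T (b i) = T x := by
  classical
  rw [finsum_eq_sum_of_support_subset _ (s := (b.repr x).support)
    (fun i hi => by simpa using Function.support_smul_subset_left _ _ hi)]
  conv_rhs => rw [← b.linearCombination_repr x, Finsupp.linearCombination_apply, map_finsuppSum]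
  simp [Finsupp.sum]

lemma inner_s_eq_repr (f : Λ) (l : YoungDiagram) : S.inner f (S.s l) = S.s.repr f l := by
  have hflip : S.inner.flip (S.s l) = Finsupp.lapply l ∘ₗ S.s.repr.toLinearMap := by
    refine S.s.ext fun μ => ?_
    simp [S.inner_schur, Finsupp.single_apply, eq_comm]
  exact DFunLike.congr_fun hflip f

lemma ext_inner_s {u v : Λ} (h : ∀ l, S.inner u (S.s l) = S.inner v (S.s l)) : u = v :=
  S.s.repr.injective <| Finsupp.ext fun l => by simpa only [inner_s_eq_repr] using h l

-- `D f` is linear in `f` as well, because the Hall inner product is nondegenerate.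
lemma D_add (x y : Λ) : S.D (x + y) = S.D x + S.D y := by
  ext g
  refine S.ext_inner_s fun l => ?_
  simp only [LinearMap.add_apply, map_add, S.D_adjoint, add_mul]

lemma D_smul (c : ℚ) (x : Λ) : S.D (c • x) = c • S.D x := by
  ext g
  refine S.ext_inner_s fun l => ?_
  simp only [LinearMap.smul_apply, map_smul, S.D_adjoint, smul_mul_assoc, smul_eq_mul]

def Dₗ : Λ →ₗ[ℚ] Λ →ₗ[ℚ] Λ where
  toFun := S.D
  map_add' := S.D_add
  map_smul' := S.D_smul

def unionDiagram (μ ν : YoungDiagram) : YoungDiagram :=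
  YoungDiagram.ofRowLens (Multiset.sort (↑μ.rowLens + ↑ν.rowLens) (· ≥ ·))
    (List.sortedGE_iff_pairwise.mpr (Multiset.pairwise_sort _ _))

lemma rowLens_unionDiagram_perm (μ ν : YoungDiagram) :
    (unionDiagram μ ν).rowLens.Perm (μ.rowLens ++ ν.rowLens) := by
  have hpos : ∀ x ∈ Multiset.sort (↑μ.rowLens + ↑ν.rowLens : Multiset ℕ) (· ≥ ·), 0 < x := by
    intro x hx
    rcases Multiset.mem_add.mp ((Multiset.mem_sort _).mp hx) with h | h
    · exact μ.pos_of_mem_rowLens x h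
    · exact ν.pos_of_mem_rowLens x h
  rw [unionDiagram, YoungDiagram.rowLens_ofRowLens_eq_self hpos, ← Multiset.coe_eq_coe,
    Multiset.sort_eq, Multiset.coe_add]

lemma p_unionDiagram (μ ν : YoungDiagram) : S.p (unionDiagram μ ν) = S.p μ * S.p ν := by
  rw [S.power_mul, S.power_mul μ, S.power_mul ν, ((rowLens_unionDiagram_perm μ ν).map _).prod_eq,
    List.map_append, List.prod_append]

lemma kron_p (f : Λ) (μ : YoungDiagram) : S.kron f (S.p μ) = S.inner f (S.p μ) • S.p μ := by
  have hflip : S.kron.flip (S.p μ) = (S.inner.flip (S.p μ)).smulRight (S.p μ) := by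
    refine S.p.ext fun ν => ?_
    simp only [LinearMap.flip_apply, LinearMap.smulRight_apply, S.kron_power, S.inner_power]
    split_ifs with hνμ
    · rw [hνμ]
    · rw [zero_smul]
  exact DFunLike.congr_fun hflip f

lemma kron_mul_p (h f : Λ) (ν : YoungDiagram) :
    S.kron h (f * S.p ν) = S.kron (S.D (S.p ν) h) f * S.p ν := by
  have key : S.kron h ∘ₗ LinearMap.mulRight ℚ (S.p ν) =
      LinearMap.mulRight ℚ (S.p ν) ∘ₗ S.kron (S.D (S.p ν) h) := by
    refine S.p.ext fun μ => ?_
    simp only [LinearMap.comp_apply, LinearMap.mulRight_apply]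
    rw [← p_unionDiagram, kron_p, kron_p, p_unionDiagram, S.D_adjoint, mul_comm (S.p ν),
      smul_mul_assoc]
  exact DFunLike.congr_fun key f

theorem kron_mul (h f g : Λ) :
    S.kron h (f * g) = ∑ᶠ l, S.kron (S.D (S.s l) h) f * S.kron (S.s l) g := by
  set c := S.p.repr g
  have hg : g = c.sum fun ν a => a • S.p ν := by
    rw [← Finsupp.linearCombination_apply, S.p.linearCombination_repr]
  let T (ν : YoungDiagram) : Λ →ₗ[ℚ] Λ :=
    LinearMap.mulRight ℚ (S.p ν) ∘ₗ S.kron.flip f ∘ₗ S.Dₗ.flip h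
  have expand : ∀ l, S.kron (S.D (S.s l) h) f * S.kron (S.s l) g =
      ∑ ν ∈ c.support, c ν • (S.s.repr (S.p ν) l • T ν (S.s l)) := by
    intro l
    conv_lhs => rw [hg]
    rw [map_finsuppSum, Finsupp.sum, Finset.mul_sum]
    refine Finset.sum_congr rfl fun ν _ => ?_
    rw [map_smul, kron_p, S.inner_symm, inner_s_eq_repr, mul_smul_comm, mul_smul_comm]
    rfl
  calc S.kron h (f * g)
      = ∑ ν ∈ c.support, c ν • T ν (S.p ν) := by
        conv_lhs => rw [hg]
        simp only [Finsupp.sum, Finset.mul_sum, mul_smul_comm, map_sum, map_smul, kron_mul_p]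
        rfl
    _ = ∑ ν ∈ c.support, ∑ᶠ l, c ν • (S.s.repr (S.p ν) l • T ν (S.s l)) := by
        refine Finset.sum_congr rfl fun ν _ => ?_
        rw [← smul_finsum', Module.Basis.finsum_repr_smul_apply]
        exact (S.s.repr (S.p ν)).hasFiniteSupport.smul_left _
    _ = ∑ᶠ l, S.kron (S.D (S.s l) h) f * S.kron (S.s l) g := by
        rw [← finsum_sum_comm, finsum_congr expand]
        exact fun ν _ => ((S.s.repr (S.p ν)).hasFiniteSupport.smul_left _).smul_right fun _ => c ν

/-- Littlewood's identity:
`s_β ∗ (s_α · s_γ) = ∑_λ (s_{β/λ} ∗ s_α) · (s_λ ∗ s_γ)`. -/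
theorem littlewood (α β γ : YoungDiagram) :
    S.kron (S.s β) (S.s α * S.s γ) =
      ∑ᶠ l : YoungDiagram, S.kron (S.skew β l) (S.s α) * S.kron (S.s l) (S.s γ) :=
  S.kron_mul _ _ _

end SymmFn
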